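/- Let n ≥ 2 and let d_1, …, d_n be positive integers with ∑_{i=1}^n d_i = 2(n − 1). Then the number of trees on the labeled vertex set {1, …, n} in which vertex i has degree exactly d_i for every i equals (n − 2)! / ∏_{i=1}^n (d_i − 1)!. -/

import Mathlib

open scoped Classical

/-- Graphs on a finite vertex set `B`, encoded as finsets of non-diagonal edges with
both endpoints in `B`. -/
noncomputable def graphsOn {V : Type*} [Fintype V] [DecidableEq V] (B : Finset V) :
    Finset (Finset (Sym2 V)) :=
  B.sym2.powerset.filter fun G => ∀ e ∈ G, ¬ e.IsDiag

/-- The edge set `G` connects all the vertices of `B`. -/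
def ConnOn {V : Type*} (B : Finset V) (G : Finset (Sym2 V)) : Prop :=
  ∀ x ∈ B, ∀ y ∈ B, (SimpleGraph.fromEdgeSet (G : Set (Sym2 V))).Reachable x y

/-- Connected graphs on `B`. -/
noncomputable def connGraphsOn {V : Type*} [Fintype V] [DecidableEq V] (B : Finset V) :
    Finset (Finset (Sym2 V)) :=
  (graphsOn B).filter fun G => ConnOn B G

/-- Trees (minimally connected graphs) on `B`: connected graphs with `|B| - 1` edges. -/
noncomputable def treesOn {V : Type*} [Fintype V] [DecidableEq V] (B : Finset V) :
    Finset (Finset (Sym2 V)) :=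
  (connGraphsOn B).filter fun G => G.card = B.card - 1

/-!
Induct on the number of vertices. Since the degrees are positive and sum to `2(n - 1) < 2n`,
some vertex `v` has degree one. Classifying the trees by the neighbour `w` of the leaf `v`,
deleting the edge `vw` is a bijection onto the trees on the remaining vertices in which the
degree of `w` drops by one. The multinomial coefficient `(n - 2)! / ∏ᵢ (dᵢ - 1)!` satisfies
the same recurrence (Pascal's rule) and the same initial value at `n = 2`.
-/

open Finset
open scoped Nat

theorem Finset.sum_update_sub_one {α : Type*} [DecidableEq α] {s : Finset α} {f : α → ℕ}
    {a : α} (ha : a ∈ s) (hfa : 1 ≤ f a) :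
    ∑ i ∈ s, Function.update f a (f a - 1) i = ∑ i ∈ s, f i - 1 := by
  rw [sum_update_of_mem ha, ← add_sum_erase s f ha, sdiff_singleton_eq_erase]
  omega

theorem Finset.exists_eq_one_of_sum_lt_two_mul_card {α : Type*} {s : Finset α} {f : α → ℕ}
    (hf : ∀ i ∈ s, 1 ≤ f i) (h : ∑ i ∈ s, f i < 2 * #s) : ∃ i ∈ s, f i = 1 := by
  by_contra! hne
  have : #s • 2 ≤ ∑ i ∈ s, f i :=
    card_nsmul_le_sum s f 2 fun i hi ↦ by have := hf i hi; have := hne i hi; omega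
  rw [smul_eq_mul] at this
  omega

theorem Finset.sum_sub_one {α : Type*} {s : Finset α} {f : α → ℕ} (hf : ∀ i ∈ s, 1 ≤ f i) :
    ∑ i ∈ s, (f i - 1) = ∑ i ∈ s, f i - #s := by
  rw [sum_tsub_distrib s hf, card_eq_sum_ones]

namespace Nat

theorem multinomial_update_sub_one_mul {α : Type*} [DecidableEq α] {s : Finset α} {f : α → ℕ}
    {a : α} (ha : a ∈ s) (hfa : 1 ≤ f a) :
    (∏ i ∈ s, (f i)!) * multinomial s (Function.update f a (f a - 1)) =
      f a * (∑ i ∈ s, f i - 1)! := by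
  have hprod : ∏ i ∈ s, (f i)! = f a * ∏ i ∈ s, (Function.update f a (f a - 1) i)! := by
    rw [← mul_prod_erase s _ ha, ← mul_prod_erase s (fun i ↦ (Function.update f a _ i)!) ha,
      Function.update_self, ← mul_assoc, mul_factorial_pred (by omega)]
    congr 1
    exact prod_congr rfl fun i hi ↦ by rw [Function.update_of_ne (ne_of_mem_erase hi)]
  rw [hprod, mul_assoc, multinomial_spec, sum_update_sub_one ha hfa]

theorem multinomial_eq_sum_multinomial_update {α : Type*} [DecidableEq α] (s : Finset α)
    (f : α → ℕ) (h : 0 < ∑ i ∈ s, f i) :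
    multinomial s f = ∑ a ∈ s with 1 ≤ f a, multinomial s (Function.update f a (f a - 1)) := by
  refine Nat.eq_of_mul_eq_mul_left (prod_pos fun i (_ : i ∈ s) ↦ factorial_pos (f i)) ?_
  rw [multinomial_spec, mul_sum, sum_congr rfl fun a ha ↦
    multinomial_update_sub_one_mul (mem_filter.1 ha).1 (mem_filter.1 ha).2, ← sum_mul,
    sum_filter_of_ne fun a _ hfa ↦ by omega, mul_factorial_pred h.ne']

end Nat

section ConnOn

variable {V : Type*} {B : Finset V} {G : Finset (Sym2 V)}

theorem ConnOn.exists_mem_of_ne (hG : ConnOn B G) {v w : V} (hv : v ∈ B) (hw : w ∈ B)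
    (hvw : v ≠ w) : ∃ e ∈ G, v ∈ e := by
  obtain ⟨p⟩ := hG v hv w hw
  cases p with
  | nil => exact absurd rfl hvw
  | cons h _ => exact ⟨_, ((SimpleGraph.fromEdgeSet_adj _).1 h).1, Sym2.mem_mk_left _ _⟩

variable [DecidableEq V]

theorem ConnOn.erase_leaf (hG : ConnOn B G) {v w : V}
    (hleaf : ∀ e ∈ G, v ∈ e → e = s(v, w)) : ConnOn (B.erase v) (G.erase s(v, w)) := by
  set H := SimpleGraph.fromEdgeSet (G.erase s(v, w) : Set (Sym2 V))
  -- a walk can only pass through the leaf `v` as `w → v → w`, so it can be short-cut at `w`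
  have shortcut : ∀ {x y : V} (p : (SimpleGraph.fromEdgeSet (G : Set (Sym2 V))).Walk x y),
      y ≠ v → (x ≠ v → H.Reachable x y) ∧ (x = v → H.Reachable w y) := by
    intro x y p hy
    induction p with
    | nil => exact ⟨fun _ ↦ .rfl, fun hx ↦ absurd hx hy⟩
    | @cons x z y hxz _ ih =>
      obtain ⟨hxzG, hxz⟩ := (SimpleGraph.fromEdgeSet_adj _).1 hxz
      obtain ⟨ihz, ihv⟩ := ih hy
      refine ⟨fun hx ↦ ?_, fun hx ↦ ?_⟩
      · by_cases hz : z = v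
        · rw [hz] at hxzG
          have hxw : x = w :=
            Sym2.congr_right.1 (Sym2.eq_swap.trans (hleaf _ hxzG (Sym2.mem_mk_right x v)))
          exact hxw ▸ ihv hz
        · have hH : H.Adj x z := by
            refine (SimpleGraph.fromEdgeSet_adj _).2 ⟨?_, hxz⟩
            simp only [coe_erase, Set.mem_sdiff, mem_coe, Set.mem_singleton_iff]
            exact ⟨hxzG, fun h ↦ (Sym2.mem_iff.1 (h ▸ Sym2.mem_mk_left v w)).elim
              (fun h ↦ hx h.symm) fun h ↦ hz h.symm⟩
          exact hH.reachable.trans (ihz hz)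
      · subst hx
        have hzw : z = w := Sym2.congr_right.1 (hleaf _ hxzG (Sym2.mem_mk_left x z))
        exact hzw ▸ ihz (Ne.symm hxz)
  intro x hx y hy
  obtain ⟨p⟩ := hG x (mem_of_mem_erase hx) y (mem_of_mem_erase hy)
  exact (shortcut p (ne_of_mem_erase hy)).1 (ne_of_mem_erase hx)

theorem ConnOn.insert_leaf {v w : V} (hG : ConnOn (B.erase v) G)
    (hw : w ∈ B.erase v) : ConnOn B (insert s(v, w) G) := by
  set H := SimpleGraph.fromEdgeSet ((insert s(v, w) G : Finset (Sym2 V)) : Set (Sym2 V))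
  have hvw : H.Adj v w :=
    (SimpleGraph.fromEdgeSet_adj _).2 ⟨by simp, (ne_of_mem_erase hw).symm⟩
  have hGH : SimpleGraph.fromEdgeSet (G : Set (Sym2 V)) ≤ H :=
    SimpleGraph.fromEdgeSet_mono (by simp [Set.subset_insert])
  have toW : ∀ x ∈ B, H.Reachable x w := fun x hx ↦ by
    by_cases hxv : x = v
    · exact hxv ▸ hvw.reachable
    · exact (hG x (mem_erase.2 ⟨hxv, hx⟩) w hw).mono hGH
  exact fun x hx y hy ↦ (toW x hx).trans (toW y hy).symm

end ConnOn

section Degrees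

variable {V : Type*} [DecidableEq V]

def edgeDegree (G : Finset (Sym2 V)) (i : V) : ℕ := #{e ∈ G | i ∈ e}

theorem edgeDegree_erase (G : Finset (Sym2 V)) (e : Sym2 V) (i : V) :
    edgeDegree (G.erase e) i = if e ∈ G ∧ i ∈ e then edgeDegree G i - 1 else edgeDegree G i := by
  simp [edgeDegree, filter_erase, card_erase_eq_ite]

theorem edgeDegree_insert (G : Finset (Sym2 V)) (e : Sym2 V) (i : V) :
    edgeDegree (insert e G) i = if e ∉ G ∧ i ∈ e then edgeDegree G i + 1 else edgeDegree G i := by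
  by_cases hi : i ∈ e <;> simp [edgeDegree, filter_insert, card_insert_eq_ite, hi]

theorem eq_of_edgeDegree_eq_one {G : Finset (Sym2 V)} {v : V} (h : edgeDegree G v = 1)
    {e e' : Sym2 V} (he : e ∈ G) (hve : v ∈ e) (he' : e' ∈ G) (hve' : v ∈ e') : e = e' :=
  card_le_one.1 h.le e (mem_filter.2 ⟨he, hve⟩) e' (mem_filter.2 ⟨he', hve'⟩)

theorem edgeDegree_eq_card_neighbors {B : Finset V} {G : Finset (Sym2 V)} (hGB : G ⊆ B.sym2)
    (hdiag : ∀ e ∈ G, ¬ e.IsDiag) (v : V) : edgeDegree G v = #{w ∈ B.erase v | s(v, w) ∈ G} := by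
  symm
  refine card_nbij (fun w ↦ s(v, w)) (fun w hw ↦ ?_) (fun w _ u _ h ↦ Sym2.congr_right.1 h) ?_
  · exact mem_filter.2 ⟨(mem_filter.1 hw).2, Sym2.mem_mk_left v w⟩
  · rintro e he
    obtain ⟨heG, hve⟩ := mem_filter.1 he
    obtain ⟨w, rfl⟩ := Sym2.mem_iff_exists.1 hve
    have hwB : w ∈ B := mem_sym2_iff.1 (hGB heG) w (Sym2.mem_mk_right v w)
    have hwv : w ≠ v := fun h ↦ hdiag _ heG (Sym2.mk_isDiag_iff.2 h.symm)
    exact ⟨w, by simpa [hwv, hwB] using heG, rfl⟩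

end Degrees

section Trees

variable {V : Type*} [Fintype V] [DecidableEq V] {B : Finset V} {T : Finset (Sym2 V)}
  {d : V → ℕ} {v w : V}

noncomputable def treesWithDegrees (B : Finset V) (d : V → ℕ) : Finset (Finset (Sym2 V)) :=
  {T ∈ treesOn B | ∀ i ∈ B, edgeDegree T i = d i}

theorem mem_treesOn :
    T ∈ treesOn B ↔ T ⊆ B.sym2 ∧ (∀ e ∈ T, ¬ e.IsDiag) ∧ ConnOn B T ∧ #T = #B - 1 := by
  simp only [treesOn, connGraphsOn, graphsOn, mem_filter, mem_powerset, and_assoc]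

theorem treesOn_pair {a b : V} (hab : a ≠ b) : treesOn {a, b} = {{s(a, b)}} := by
  ext T
  rw [mem_treesOn, mem_singleton]
  constructor
  · rintro ⟨hsub, hdiag, -, hcard⟩
    obtain ⟨e, rfl⟩ := card_eq_one.1 (by simpa [hab] using hcard)
    have he := hsub (mem_singleton_self e)
    have hne := hdiag e (mem_singleton_self e)
    induction e using Sym2.ind with
    | _ x y =>
      simp only [mk_mem_sym2_iff, mem_insert, mem_singleton, Sym2.mk_isDiag_iff] at he hne
      rcases he with ⟨rfl | rfl, rfl | rfl⟩ <;> simp_all [Sym2.eq_swap]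
  · rintro rfl
    have hadj : (SimpleGraph.fromEdgeSet ({s(a, b)} : Set (Sym2 V))).Adj a b := by simp [hab]
    refine ⟨by simp, by simp [hab], ?_, by simp [hab]⟩
    intro x hx y hy
    simp only [mem_insert, mem_singleton] at hx hy
    rcases hx with rfl | rfl <;> rcases hy with rfl | rfl
    all_goals first | rfl | simpa using hadj.reachable | simpa using hadj.symm.reachable

theorem notMem_of_mem_treesOn (hT : T ∈ treesOn B) (hv : v ∉ B) {e : Sym2 V} (he : e ∈ T) :
    v ∉ e :=
  fun hve ↦ hv (mem_sym2_iff.1 ((mem_treesOn.1 hT).1 he) v hve)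

theorem erase_mem_treesOn_of_leaf (hT : T ∈ treesOn B) (hv : v ∈ B)
    (hleaf : ∀ e ∈ T, v ∈ e → e = s(v, w)) (hvw : s(v, w) ∈ T) :
    T.erase s(v, w) ∈ treesOn (B.erase v) := by
  obtain ⟨hsub, hdiag, hconn, hcard⟩ := mem_treesOn.1 hT
  refine mem_treesOn.2 ⟨fun e he ↦ ?_, fun e he ↦ hdiag e (mem_of_mem_erase he),
    hconn.erase_leaf hleaf, ?_⟩
  · obtain ⟨hne, heT⟩ := mem_erase.1 he
    refine mem_sym2_iff.2 fun a hae ↦ mem_erase.2 ⟨?_, mem_sym2_iff.1 (hsub heT) a hae⟩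
    rintro rfl
    exact hne (hleaf e heT hae)
  · rw [card_erase_of_mem hvw, card_erase_of_mem hv, hcard]

theorem insert_mem_treesOn (hT : T ∈ treesOn (B.erase v)) (hv : v ∈ B) (hw : w ∈ B.erase v) :
    insert s(v, w) T ∈ treesOn B := by
  obtain ⟨hsub, hdiag, hconn, hcard⟩ := mem_treesOn.1 hT
  have hvwT : s(v, w) ∉ T :=
    fun h ↦ notMem_of_mem_treesOn hT (notMem_erase v B) h (Sym2.mem_mk_left v w)
  refine mem_treesOn.2 ⟨insert_subset ?_ (hsub.trans (sym2_mono (erase_subset v B))), ?_,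
    hconn.insert_leaf hw, ?_⟩
  · exact mk_mem_sym2_iff.2 ⟨hv, mem_of_mem_erase hw⟩
  · simpa [Sym2.mk_isDiag_iff, (ne_of_mem_erase hw).symm] using hdiag
  · rw [card_insert_of_notMem hvwT, hcard, card_erase_of_mem hv]
    have := card_pos.2 ⟨w, hw⟩
    rw [card_erase_of_mem hv] at this
    omega

theorem erase_mem_treesWithDegrees (hT : T ∈ treesWithDegrees B d) (hv : v ∈ B)
    (hdv : d v = 1) (hvw : s(v, w) ∈ T) :
    T.erase s(v, w) ∈ treesWithDegrees (B.erase v) (Function.update d w (d w - 1)) := by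
  obtain ⟨hTB, hdeg⟩ := mem_filter.1 hT
  have hleaf (e : Sym2 V) (he : e ∈ T) (hve : v ∈ e) : e = s(v, w) :=
    eq_of_edgeDegree_eq_one ((hdeg v hv).trans hdv) he hve hvw (Sym2.mem_mk_left v w)
  refine mem_filter.2 ⟨erase_mem_treesOn_of_leaf hTB hv hleaf hvw, fun i hi ↦ ?_⟩
  have hiv := ne_of_mem_erase hi
  rw [edgeDegree_erase, hdeg i (mem_of_mem_erase hi)]
  by_cases hiw : i = w
  · subst hiw
    simp [hvw]
  · simp [hiv, hiw]

theorem insert_mem_treesWithDegrees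
    (hT : T ∈ treesWithDegrees (B.erase v) (Function.update d w (d w - 1))) (hv : v ∈ B)
    (hw : w ∈ B.erase v) (hdv : d v = 1) (hdw : 1 ≤ d w) :
    insert s(v, w) T ∈ treesWithDegrees B d := by
  obtain ⟨hTB, hdeg⟩ := mem_filter.1 hT
  have hvT (e : Sym2 V) (he : e ∈ T) : v ∉ e := notMem_of_mem_treesOn hTB (notMem_erase v B) he
  have hvwT : s(v, w) ∉ T := fun h ↦ hvT _ h (Sym2.mem_mk_left v w)
  refine mem_filter.2 ⟨insert_mem_treesOn hTB hv hw, fun i hi ↦ ?_⟩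
  rw [edgeDegree_insert]
  by_cases hiv : i = v
  · subst hiv
    have : edgeDegree T i = 0 := card_eq_zero.2 (filter_eq_empty_iff.2 fun e he ↦ hvT e he)
    simp [hvwT, this, hdv]
  · have := hdeg i (mem_erase.2 ⟨hiv, hi⟩)
    by_cases hiw : i = w
    · subst hiw
      rw [Function.update_self] at this
      simp only [hvwT, Sym2.mem_mk_right, not_false_eq_true, and_self, if_true, this]
      omega
    · simp_all

theorem card_filter_mem_treesWithDegrees (hv : v ∈ B) (hw : w ∈ B.erase v)
    (hdv : d v = 1) (hdw : 1 ≤ d w) :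
    #{T ∈ treesWithDegrees B d | s(v, w) ∈ T} =
      #(treesWithDegrees (B.erase v) (Function.update d w (d w - 1))) := by
  refine card_bij' (fun T _ ↦ T.erase s(v, w)) (fun T _ ↦ insert s(v, w) T)
    (fun T hT ↦ erase_mem_treesWithDegrees (mem_filter.1 hT).1 hv hdv (mem_filter.1 hT).2)
    (fun T hT ↦ mem_filter.2 ⟨insert_mem_treesWithDegrees hT hv hw hdv hdw, mem_insert_self _ _⟩)
    (fun T hT ↦ insert_erase (mem_filter.1 hT).2) (fun T hT ↦ erase_insert fun h ↦ ?_)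
  exact notMem_of_mem_treesOn (mem_filter.1 hT).1 (notMem_erase v B) h (Sym2.mem_mk_left v w)

theorem card_treesWithDegrees_eq_sum (hv : v ∈ B) (hdv : d v = 1) (hpos : ∀ i ∈ B, 1 ≤ d i) :
    #(treesWithDegrees B d) =
      ∑ w ∈ B.erase v, #(treesWithDegrees (B.erase v) (Function.update d w (d w - 1))) := by
  set S := treesWithDegrees B d
  have hneighbor : ∀ T ∈ S, #{w ∈ B.erase v | s(v, w) ∈ T} = 1 := fun T hT ↦ by
    obtain ⟨hTB, hdeg⟩ := mem_filter.1 hT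
    obtain ⟨hsub, hdiag, -⟩ := mem_treesOn.1 hTB
    rw [← edgeDegree_eq_card_neighbors hsub hdiag, hdeg v hv, hdv]
  calc #S = ∑ T ∈ S, #{w ∈ B.erase v | s(v, w) ∈ T} := by
        rw [card_eq_sum_ones, sum_congr rfl fun T hT ↦ (hneighbor T hT).symm]
    _ = ∑ w ∈ B.erase v, #{T ∈ S | s(v, w) ∈ T} :=
        sum_card_bipartiteAbove_eq_sum_card_bipartiteBelow (fun T w ↦ s(v, w) ∈ T)
    _ = _ := sum_congr rfl fun w hw ↦
        card_filter_mem_treesWithDegrees hv hw hdv (hpos w (mem_of_mem_erase hw))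

theorem treesWithDegrees_eq_empty (hB : 2 ≤ #B) (hw : w ∈ B) (hdw : d w = 0) :
    treesWithDegrees B d = ∅ := by
  refine filter_eq_empty_iff.2 fun T hT hdeg ↦ ?_
  obtain ⟨u, hu, huw⟩ := exists_mem_ne hB w
  obtain ⟨e, he, hwe⟩ := (mem_treesOn.1 hT).2.2.1.exists_mem_of_ne hw hu huw.symm
  have : edgeDegree T w = 0 := (hdeg w hw).trans hdw
  exact notMem_empty e (card_eq_zero.1 this ▸ mem_filter.2 ⟨he, hwe⟩)

theorem card_treesWithDegrees_pair {a b : V} (hab : a ≠ b) (ha : d a = 1) (hb : d b = 1) :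
    #(treesWithDegrees {a, b} d) = 1 := by
  rw [treesWithDegrees, treesOn_pair hab, filter_singleton, if_pos]
  · rfl
  · simp [edgeDegree, filter_singleton, ha, hb]

theorem card_treesWithDegrees (hB : 2 ≤ #B) (hpos : ∀ i ∈ B, 1 ≤ d i)
    (hsum : ∑ i ∈ B, d i = 2 * (#B - 1)) :
    #(treesWithDegrees B d) = Nat.multinomial B fun i ↦ d i - 1 := by
  induction hn : #B generalizing B d with
  | zero => omega
  | succ n ih =>
    rcases (by omega : n = 1 ∨ 2 ≤ n) with rfl | hn2
    · obtain ⟨a, b, hab, rfl⟩ := card_eq_two.1 hn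
      rw [sum_pair hab, hn] at hsum
      have := hpos a (by simp)
      have := hpos b (by simp)
      rw [card_treesWithDegrees_pair hab (by omega) (by omega), Nat.binomial_eq_choose hab]
      simp [show d a = 1 by omega, show d b = 1 by omega]
    obtain ⟨v, hv, hdv⟩ := exists_eq_one_of_sum_lt_two_mul_card hpos (by omega)
    have hcard : #(B.erase v) = n := by rw [card_erase_of_mem hv]; omega
    have hsum' : ∑ i ∈ B.erase v, d i = 2 * n - 1 := by
      have := add_sum_erase B d hv; omega
    calc #(treesWithDegrees B d)
        = ∑ w ∈ B.erase v, #(treesWithDegrees (B.erase v) (Function.update d w (d w - 1))) :=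
          card_treesWithDegrees_eq_sum hv hdv hpos
      _ = ∑ w ∈ B.erase v with 1 ≤ d w - 1, Nat.multinomial (B.erase v)
            (Function.update (fun i ↦ d i - 1) w (d w - 1 - 1)) := by
          rw [sum_filter]
          refine sum_congr rfl fun w hw ↦ ?_
          split_ifs with hdw
          · rw [ih (by omega) ?_ ?_ hcard]
            · exact congrArg _ (funext fun i ↦ Function.apply_update (fun _ k ↦ k - 1) d w _ i)
            · intro i hi
              rcases eq_or_ne i w with rfl | hiw
              · simp only [Function.update_self]; omega
              · simpa [hiw] using hpos i (mem_of_mem_erase hi)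
            · rw [sum_update_sub_one hw (hpos w (mem_of_mem_erase hw)), hsum', hcard]; omega
          · rw [treesWithDegrees_eq_empty (by omega) hw (by simp; omega), card_empty]
      _ = Nat.multinomial (B.erase v) fun i ↦ d i - 1 := by
          refine (Nat.multinomial_eq_sum_multinomial_update _ _ ?_).symm
          rw [sum_sub_one fun i hi ↦ hpos i (mem_of_mem_erase hi), hsum', hcard]
          omega
      _ = Nat.multinomial B fun i ↦ d i - 1 := by
          conv_rhs => rw [← insert_erase hv]
          rw [Nat.multinomial_insert (notMem_erase v B), hdv]
          simp

end Trees

/-- The number of trees on `{0, …, n-1}` in which vertex `i` has degree exactly `d i`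
(for a positive degree sequence summing to `2(n-1)`) equals `(n-2)! / ∏ᵢ (dᵢ - 1)!`. -/
theorem card_trees_with_degree_sequence (n : ℕ) (hn : 2 ≤ n) (d : Fin n → ℕ)
    (hpos : ∀ i, 1 ≤ d i) (hsum : ∑ i, d i = 2 * (n - 1)) :
    ((treesOn (Finset.univ : Finset (Fin n))).filter
        (fun T => ∀ i : Fin n, (T.filter fun e => i ∈ e).card = d i)).card
      = Nat.factorial (n - 2) / ∏ i, Nat.factorial (d i - 1) := by
  have hcount := card_treesWithDegrees (B := univ) (d := d) (by simpa) (fun i _ ↦ hpos i)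
    (by simpa using hsum)
  have hexcess : ∑ i, (d i - 1) = n - 2 := by
    rw [sum_sub_one fun i _ ↦ hpos i, hsum, card_univ, Fintype.card_fin]
    omega
  rw [Nat.multinomial, hexcess] at hcount
  rw [← hcount]
  simp [treesWithDegrees, edgeDegree]
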